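/- The minimum cost of a fractional pebbling of the complete binary tree of height 4 is exactly 3. -/

import Mathlib

/-! ## Fractional black-white pebbling -/

/-- A fractional pebble configuration: black and white pebble values on each node. -/
structure FConfig (V : Type) where
  b : V → ℝ
  w : V → ℝ

namespace FConfig

/-- Validity: all values nonnegative, total value of each node at most 1. -/
def Valid {V : Type} (C : FConfig V) : Prop :=
  ∀ v, 0 ≤ C.b v ∧ 0 ≤ C.w v ∧ C.b v + C.w v ≤ 1

/-- Total pebble weight of a configuration. -/
noncomputable def weight {V : Type} [Fintype V] (C : FConfig V) : ℝ :=
  ∑ v, (C.b v + C.w v)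

/-- The empty configuration. -/
def zero (V : Type) : FConfig V := ⟨fun _ => 0, fun _ => 0⟩

/-- A whole (non-fractional) configuration: all values 0 or 1. -/
def Whole {V : Type} (C : FConfig V) : Prop :=
  ∀ v, (C.b v = 0 ∨ C.b v = 1) ∧ (C.w v = 0 ∨ C.w v = 1)

/-- A black configuration: whole, and with no white pebbles. -/
def BlackOnly {V : Type} (C : FConfig V) : Prop :=
  C.Whole ∧ ∀ v, C.w v = 0

end FConfig

/-- One legal move of the fractional black-white pebble game (no white sliding):
(i) decrease a black value; (ii) increase a white value; (iii) if every child of `v`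
has total pebble value 1, decrease `w v` to 0 and/or increase `b v` arbitrarily while
simultaneously decreasing the black values of the children of `v` arbitrarily.
Here `child c v` means `c` is a child of `v`. -/
def FMove {V : Type} (child : V → V → Prop) (C C' : FConfig V) : Prop :=
  (∃ v, C'.b v ≤ C.b v ∧ C'.w v = C.w v ∧
     ∀ u, u ≠ v → C'.b u = C.b u ∧ C'.w u = C.w u) ∨
  (∃ v, C'.b v = C.b v ∧ C.w v ≤ C'.w v ∧
     ∀ u, u ≠ v → C'.b u = C.b u ∧ C'.w u = C.w u) ∨
  (∃ v, (∀ c, child c v → C.b c + C.w c = 1) ∧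
     C.b v ≤ C'.b v ∧ (C'.w v = 0 ∨ C'.w v = C.w v) ∧
     (∀ c, child c v → C'.b c ≤ C.b c ∧ C'.w c = C.w c) ∧
     (∀ u, u ≠ v → ¬ child u v → C'.b u = C.b u ∧ C'.w u = C.w u))

/-- The additional white sliding move: if `w v = 1`, `j` is a child of `v`, and every
child of `v` other than `j` has total pebble value 1, then set `w v = 0` and increase
`w j` so that `j` gets total pebble value 1. -/
def WhiteSlide {V : Type} (child : V → V → Prop) (C C' : FConfig V) : Prop :=
  ∃ v j, child j v ∧ j ≠ v ∧ C.w v = 1 ∧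
    (∀ c, child c v → c ≠ j → C.b c + C.w c = 1) ∧
    C'.w v = 0 ∧ C'.b v = C.b v ∧
    C'.b j = C.b j ∧ C.w j ≤ C'.w j ∧ C'.b j + C'.w j = 1 ∧
    (∀ u, u ≠ v → u ≠ j → C'.b u = C.b u ∧ C'.w u = C.w u)

/-- A pebbling of cost at most `p`, with moves given by `move`, all configurations
satisfying the extra constraint `Extra`, starting and ending with the empty
configuration and achieving `Goal` (a property of the whole sequence together with
its length). -/
def PebblingLE {V : Type} [Fintype V] (move : FConfig V → FConfig V → Prop)
    (Extra : FConfig V → Prop) (Goal : (ℕ → FConfig V) → ℕ → Prop) (p : ℝ) : Prop :=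
  ∃ (n : ℕ) (C : ℕ → FConfig V),
    C 0 = FConfig.zero V ∧ C n = FConfig.zero V ∧
    (∀ t ≤ n, (C t).Valid) ∧
    (∀ t ≤ n, Extra (C t)) ∧
    (∀ t < n, move (C t) (C (t + 1))) ∧
    Goal C n ∧
    (∀ t ≤ n, (C t).weight ≤ p)

/-! ## The complete `d`-ary tree of height `h` (with `h` levels) -/

/-- Nodes of the complete `d`-ary tree with `h` levels: a level `l < h`
together with an index among the `d ^ l` nodes of that level. -/
abbrev TNode (d h : ℕ) := Σ l : Fin h, Fin (d ^ (l : ℕ))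

/-- `c` is a child of `v` in the complete `d`-ary tree. -/
def IsChild (d h : ℕ) (c v : TNode d h) : Prop :=
  (c.1 : ℕ) = (v.1 : ℕ) + 1 ∧ ∃ j : Fin d, (c.2 : ℕ) = d * (v.2 : ℕ) + (j : ℕ)

/-- The root of the tree. -/
def troot (d h : ℕ) (hh : 0 < h) : TNode d h :=
  ⟨⟨0, hh⟩, ⟨0, by simp⟩⟩

/-- The tree `T_d^h` has a black pebbling of cost at most `p`. -/
def BlackPebbles (d h : ℕ) (hh : 0 < h) (p : ℝ) : Prop :=
  PebblingLE (FMove (IsChild d h)) FConfig.BlackOnly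
    (fun C n => ∃ t ≤ n, (C t).b (troot d h hh) = 1) p

/-- The tree `T_d^h` has a whole black-white pebbling (no white sliding)
of cost at most `p`. -/
def BWPebbles (d h : ℕ) (hh : 0 < h) (p : ℝ) : Prop :=
  PebblingLE (FMove (IsChild d h)) FConfig.Whole
    (fun C n => ∃ t ≤ n, (C t).b (troot d h hh) = 1) p

/-- The tree `T_d^h` has a fractional pebbling of cost at most `p`. -/
def FRPebbles (d h : ℕ) (hh : 0 < h) (p : ℝ) : Prop :=
  PebblingLE (FMove (IsChild d h)) (fun _ => True)
    (fun C n => ∃ t ≤ n, (C t).b (troot d h hh) = 1) p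

/-- Fractional pebbling of `T_d^h` where white sliding moves are also permitted. -/
def FRPebblesWS (d h : ℕ) (hh : 0 < h) (p : ℝ) : Prop :=
  PebblingLE (fun C C' => FMove (IsChild d h) C C' ∨ WhiteSlide (IsChild d h) C C')
    (fun _ => True)
    (fun C n => ∃ t ≤ n, (C t).b (troot d h hh) = 1) p

/-!
Upper bound: an explicit whole pebbling of cost 3.

Lower bound, for a pebbling of cost `p < 3`. A black value can only be raised, and a white
value only lowered, while all children of the node are full, and then these two children
alone weigh 2. Hence two white values present at the same time sum to at most `p - 2 < 1`,
so of two full nodes each carries black, placed at an earlier such moment and held since.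
When the root is pebbled at `t₀` its children `x`, `y` are full, so both carry black, placed
at times `ρx < ρy`, say (equal times would give four full nodes at once). The whites on the
children of `y` at time `ρy` survive until `t₀`: when removed, the blacks held on `x` and
`y`, which sum to more than 1, would sit next to two full grandchildren. So these children
carry black placed at times `ρj < ρk`, and at the later of the events `ρx`, `ρk` two full
nodes sit next to two held black values summing to more than 1.
-/

namespace FConfig

variable {V : Type} {K : FConfig V}

def ChildrenFull (child : V → V → Prop) (K : FConfig V) (v : V) : Prop :=
  ∀ c, child c v → K.b c + K.w c = 1

theorem Valid.value_nonneg (hK : K.Valid) (v : V) : 0 ≤ K.b v + K.w v :=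
  add_nonneg (hK v).1 (hK v).2.1

theorem Valid.b_le_value (hK : K.Valid) (v : V) : K.b v ≤ K.b v + K.w v :=
  le_add_of_nonneg_right (hK v).2.1

theorem Valid.w_le_value (hK : K.Valid) (v : V) : K.w v ≤ K.b v + K.w v :=
  le_add_of_nonneg_left (hK v).1

theorem Valid.sum_le_weight [Fintype V] [DecidableEq V] (hK : K.Valid) {l : List V}
    (hl : l.Nodup) : (l.map fun v => K.b v + K.w v).sum ≤ K.weight := by
  rw [← List.sum_toFinset _ hl]
  exact Finset.sum_le_sum_of_subset_of_nonneg (Finset.subset_univ _)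
    fun v _ _ => hK.value_nonneg v

end FConfig

variable {V : Type} {child : V → V → Prop}

theorem FMove.childrenFull {K K' : FConfig V} (h : FMove child K K') {u : V}
    (hu : K.b u < K'.b u ∨ K'.w u < K.w u) : K.ChildrenFull child u := by
  rcases h with ⟨v, hb, hw, hrest⟩ | ⟨v, hb, hw, hrest⟩ | ⟨v, hfull, -, -, hkids, hrest⟩
  · by_cases huv : u = v
    · subst huv; rcases hu with hu | hu <;> linarith
    · obtain ⟨hb', hw'⟩ := hrest u huv; rw [hb', hw'] at hu; simp at hu
  · by_cases huv : u = v
    · subst huv; rcases hu with hu | hu <;> linarith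
    · obtain ⟨hb', hw'⟩ := hrest u huv; rw [hb', hw'] at hu; simp at hu
  · by_cases huv : u = v
    · exact huv ▸ hfull
    by_cases hc : child u v
    · obtain ⟨hb', hw'⟩ := hkids u hc; rcases hu with hu | hu <;> linarith
    · obtain ⟨hb', hw'⟩ := hrest u huv hc; rw [hb', hw'] at hu; simp at hu

structure IsFracPebbling [Fintype V] (child : V → V → Prop) (n : ℕ) (C : ℕ → FConfig V)
    (p : ℝ) : Prop where
  init : C 0 = FConfig.zero V
  final : C n = FConfig.zero V
  valid : ∀ t ≤ n, (C t).Valid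
  move : ∀ t < n, FMove child (C t) (C (t + 1))
  weight_le : ∀ t ≤ n, (C t).weight ≤ p

def BlackHeld (child : V → V → Prop) (C : ℕ → FConfig V) (u : V) (ρ t : ℕ) : Prop :=
  ρ < t ∧ (C ρ).ChildrenFull child u ∧ ∀ s, ρ < s → s ≤ t → (C t).b u ≤ (C s).b u

def WhiteHeld (child : V → V → Prop) (C : ℕ → FConfig V) (u : V) (t σ : ℕ) : Prop :=
  t ≤ σ ∧ (C σ).ChildrenFull child u ∧ ∀ s, t ≤ s → s ≤ σ → (C t).w u ≤ (C s).w u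

namespace IsFracPebbling

variable [Fintype V] {n : ℕ} {C : ℕ → FConfig V} {p : ℝ}

theorem exists_blackHeld (P : IsFracPebbling child n C p) {u : V} {t : ℕ} (ht : t ≤ n)
    (hb : 0 < (C t).b u) : ∃ ρ, BlackHeld child C u ρ t := by
  induction t with
  | zero => simp [P.init, FConfig.zero] at hb
  | succ t ih =>
    rcases le_or_gt ((C (t + 1)).b u) ((C t).b u) with hle | hlt
    · obtain ⟨ρ, hρ, hfull, hheld⟩ := ih (by omega) (hb.trans_le hle)
      refine ⟨ρ, by omega, hfull, fun s hρs hst => ?_⟩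
      rcases Nat.le_succ_iff.mp hst with hst | rfl
      · exact hle.trans (hheld s hρs hst)
      · exact le_rfl
    · refine ⟨t, by omega, (P.move t (by omega)).childrenFull (.inl hlt), fun s hts hst => ?_⟩
      rw [show s = t + 1 by omega]

theorem exists_whiteHeld (P : IsFracPebbling child n C p) {u : V} {t : ℕ} (ht : t ≤ n)
    (hw : 0 < (C t).w u) : ∃ σ < n, WhiteHeld child C u t σ := by
  induction h : n - t generalizing t with
  | zero => simp [show t = n by omega, P.final, FConfig.zero] at hw
  | succ d ih =>
    have htn : t < n := by omega
    rcases lt_or_ge ((C (t + 1)).w u) ((C t).w u) with hlt | hle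
    · exact ⟨t, htn, le_rfl, (P.move t htn).childrenFull (.inr hlt),
        fun s hts hst => by rw [show s = t by omega]⟩
    · obtain ⟨σ, hσn, htσ, hfull, hheld⟩ := ih htn (hw.trans_le hle) (by omega)
      refine ⟨σ, hσn, by omega, hfull, fun s hts hsσ => ?_⟩
      rcases hts.eq_or_lt with rfl | hts
      · exact le_rfl
      · exact hle.trans (hheld s hts hsσ)

theorem b_le_value_of_blackHeld (P : IsFracPebbling child n C p) {u : V} {ρ t s : ℕ}
    (h : BlackHeld child C u ρ t) (ht : t ≤ n) (hρs : ρ < s) (hst : s ≤ t) :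
    (C t).b u ≤ (C s).b u + (C s).w u :=
  (h.2.2 s hρs hst).trans ((P.valid s (hst.trans ht)).b_le_value u)

section

variable [DecidableEq V]

theorem two_add_le_of_childrenFull (P : IsFracPebbling child n C p) {s : ℕ} (hs : s ≤ n)
    {z c c' a a' : V} (hc : child c z) (hc' : child c' z) (hnd : [c, c', a, a'].Nodup)
    (hz : (C s).ChildrenFull child z) :
    2 + ((C s).b a + (C s).w a) + ((C s).b a' + (C s).w a') ≤ p := by
  have h := (P.valid s hs).sum_le_weight hnd
  simp only [List.map_cons, List.map_nil, List.sum_cons, List.sum_nil, hz c hc,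
    hz c' hc'] at h
  linarith [P.weight_le s hs]

theorem four_le_of_childrenFull (P : IsFracPebbling child n C p) {s : ℕ} (hs : s ≤ n)
    {z z' c c' d d' : V} (hc : child c z) (hc' : child c' z) (hd : child d z')
    (hd' : child d' z') (hnd : [c, c', d, d'].Nodup) (hz : (C s).ChildrenFull child z)
    (hz' : (C s).ChildrenFull child z') : 4 ≤ p := by
  have := P.two_add_le_of_childrenFull hs hc hc' hnd hz
  rw [hz' d hd, hz' d' hd'] at this
  linarith

theorem two_add_w_add_le_of_whiteHeld (P : IsFracPebbling child n C p) {z c c' a : V}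
    {t σ : ℕ} (hσ : WhiteHeld child C z t σ) (hσn : σ ≤ n) (hc : child c z)
    (hc' : child c' z) (hnd : [c, c', z, a].Nodup) {r : ℝ}
    (hr : r ≤ (C σ).b a + (C σ).w a) : 2 + (C t).w z + r ≤ p := by
  obtain ⟨htσ, hfull, hheld⟩ := hσ
  have := P.two_add_le_of_childrenFull hσn hc hc' hnd hfull
  linarith [hheld σ htσ le_rfl, (P.valid σ hσn).w_le_value z]

/-- Two white values present at the same time are both still present when the first of
them is removed, next to the two full children that removal needs. -/
theorem two_add_w_add_w_le (P : IsFracPebbling child n C p) (hp : 2 ≤ p) {t : ℕ}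
    (ht : t ≤ n) {z₀ z₁ c₀ c₀' c₁ c₁' : V} (hc₀ : child c₀ z₀) (hc₀' : child c₀' z₀)
    (hc₁ : child c₁ z₁) (hc₁' : child c₁' z₁) (hnd₀ : [c₀, c₀', z₀, z₁].Nodup)
    (hnd₁ : [c₁, c₁', z₁, z₀].Nodup) : 2 + (C t).w z₀ + (C t).w z₁ ≤ p := by
  have hw₀ := (P.valid t ht z₀).2.1
  have hw₁ := (P.valid t ht z₁).2.1
  rcases hw₀.eq_or_lt with h₀ | h₀ <;> rcases hw₁.eq_or_lt with h₁ | h₁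
  · linarith
  · obtain ⟨σ, hσn, hσ⟩ := P.exists_whiteHeld ht h₁
    have := P.two_add_w_add_le_of_whiteHeld hσ hσn.le hc₁ hc₁' hnd₁
      ((P.valid σ hσn.le).value_nonneg z₀)
    linarith
  · obtain ⟨σ, hσn, hσ⟩ := P.exists_whiteHeld ht h₀
    have := P.two_add_w_add_le_of_whiteHeld hσ hσn.le hc₀ hc₀' hnd₀
      ((P.valid σ hσn.le).value_nonneg z₁)
    linarith
  · obtain ⟨σ₀, hσ₀n, hσ₀⟩ := P.exists_whiteHeld ht h₀
    obtain ⟨σ₁, hσ₁n, hσ₁⟩ := P.exists_whiteHeld ht h₁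
    rcases le_total σ₀ σ₁ with h | h
    · exact P.two_add_w_add_le_of_whiteHeld hσ₀ hσ₀n.le hc₀ hc₀' hnd₀
        ((hσ₁.2.2 σ₀ hσ₀.1 h).trans ((P.valid σ₀ hσ₀n.le).w_le_value z₁))
    · have := P.two_add_w_add_le_of_whiteHeld hσ₁ hσ₁n.le hc₁ hc₁' hnd₁
        ((hσ₀.2.2 σ₁ hσ₁.1 h).trans ((P.valid σ₁ hσ₁n.le).w_le_value z₀))
      linarith

end

end IsFracPebbling

namespace FConfig

variable [DecidableEq V]

def ofFinsets (B W : Finset V) : FConfig V :=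
  ⟨fun v => if v ∈ B then 1 else 0, fun v => if v ∈ W then 1 else 0⟩

theorem ofFinsets_empty : ofFinsets (∅ : Finset V) ∅ = zero V := by
  simp [ofFinsets, zero]

theorem valid_ofFinsets {B W : Finset V} (h : Disjoint B W) : (ofFinsets B W).Valid := by
  intro v
  by_cases hB : v ∈ B <;> by_cases hW : v ∈ W <;> simp [ofFinsets, hB, hW]
  exact (Finset.disjoint_left.mp h hB hW).elim

theorem ofFinsets_value_eq_one {B W : Finset V} (h : Disjoint B W) {v : V}
    (hv : v ∈ B ∨ v ∈ W) : (ofFinsets B W).b v + (ofFinsets B W).w v = 1 := by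
  rcases hv with hB | hW
  · simp [ofFinsets, hB, Finset.disjoint_left.mp h hB]
  · simp [ofFinsets, hW, Finset.disjoint_right.mp h hW]

theorem weight_ofFinsets [Fintype V] (B W : Finset V) :
    (ofFinsets B W).weight = B.card + W.card := by
  simp [weight, ofFinsets, Finset.sum_add_distrib]

end FConfig

inductive WholeMove (V : Type)
  | placeBlack (v : V)
  | removeBlack (v : V)
  | placeWhite (v : V)
  | removeWhite (v : V)

namespace WholeMove

def Legal (child : V → V → Prop) : WholeMove V → Finset V × Finset V → Prop
  | placeBlack v, s | removeWhite v, s => ∀ c, child c v → c ∈ s.1 ∨ c ∈ s.2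
  | removeBlack _, _ | placeWhite _, _ => True

variable [DecidableEq V] (child : V → V → Prop) [DecidableRel child]

def apply : WholeMove V → Finset V × Finset V → Finset V × Finset V
  | placeBlack v, (B, W) => (insert v (B.filter fun c => ¬child c v), W)
  | removeBlack v, (B, W) => (B.erase v, W)
  | placeWhite v, (B, W) => (B, insert v W)
  | removeWhite v, (B, W) => (B.filter fun c => ¬child c v, W.erase v)

instance [Fintype V] (a : WholeMove V) (s : Finset V × Finset V) :
    Decidable (a.Legal child s) := by
  cases a <;> unfold Legal <;> infer_instance

def run (as : List (WholeMove V)) (t : ℕ) : Finset V × Finset V :=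
  (as.take t).foldl (fun s a => a.apply child s) (∅, ∅)

theorem run_succ (as : List (WholeMove V)) {t : ℕ} (ht : t < as.length) :
    run child as (t + 1) = as[t].apply child (run child as t) := by
  rw [run, run, List.take_add_one, List.getElem?_eq_getElem ht, Option.toList_some,
    List.foldl_append, List.foldl_cons, List.foldl_nil]

variable {child}

theorem fMove_apply (hirr : ∀ v, ¬child v v) {a : WholeMove V} {s : Finset V × Finset V}
    (hs : Disjoint s.1 s.2) (ha : a.Legal child s) :
    FMove child (FConfig.ofFinsets s.1 s.2)
      (FConfig.ofFinsets (a.apply child s).1 (a.apply child s).2) := by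
  obtain ⟨B, W⟩ := s
  dsimp only at hs ha ⊢
  have hfull (v : V) (h : ∀ c, child c v → c ∈ B ∨ c ∈ W) :
      ∀ c, child c v → (FConfig.ofFinsets B W).b c + (FConfig.ofFinsets B W).w c = 1 :=
    fun c hc => FConfig.ofFinsets_value_eq_one hs (h c hc)
  cases a with
  | placeBlack v =>
    refine .inr <| .inr ⟨v, hfull v ha, ?_, .inr rfl, fun c hc => ⟨?_, rfl⟩,
      fun u huv hu => ⟨?_, rfl⟩⟩
    · by_cases hv : v ∈ B <;> simp [apply, FConfig.ofFinsets, hv]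
    · have hcv : c ≠ v := fun h => hirr v (h ▸ hc)
      by_cases hcB : c ∈ B <;> simp [apply, FConfig.ofFinsets, hc, hcv, hcB]
    · simp [apply, FConfig.ofFinsets, huv, hu]
  | removeBlack v =>
    refine .inl ⟨v, ?_, rfl, fun u huv => ⟨?_, rfl⟩⟩
    · by_cases hv : v ∈ B <;> simp [apply, FConfig.ofFinsets, hv]
    · simp [apply, FConfig.ofFinsets, huv]
  | placeWhite v =>
    refine .inr <| .inl ⟨v, rfl, ?_, fun u huv => ⟨rfl, ?_⟩⟩
    · by_cases hv : v ∈ W <;> simp [apply, FConfig.ofFinsets, hv]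
    · simp [apply, FConfig.ofFinsets, huv]
  | removeWhite v =>
    refine .inr <| .inr ⟨v, hfull v ha, ?_, .inl ?_, fun c hc => ⟨?_, ?_⟩,
      fun u huv hu => ⟨?_, ?_⟩⟩
    · simp [apply, FConfig.ofFinsets, hirr v]
    · simp [apply, FConfig.ofFinsets]
    · by_cases hcB : c ∈ B <;> simp [apply, FConfig.ofFinsets, hc, hcB]
    · have hcv : c ≠ v := fun h => hirr v (h ▸ hc)
      simp [apply, FConfig.ofFinsets, hcv]
    · simp [apply, FConfig.ofFinsets, hu]
    · simp [apply, FConfig.ofFinsets, huv]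

theorem pebblingLE_of_run [Fintype V] (hirr : ∀ v, ¬child v v) (as : List (WholeMove V)) {r : V}
    {k : ℕ}
    (hlegal : ∀ t (ht : t < as.length), as[t].Legal child (run child as t))
    (hdisj : ∀ t ≤ as.length, Disjoint (run child as t).1 (run child as t).2)
    (hend : run child as as.length = (∅, ∅))
    (hcost : ∀ t ≤ as.length, (run child as t).1.card + (run child as t).2.card ≤ k)
    (hgoal : ∃ t ≤ as.length, r ∈ (run child as t).1) :
    PebblingLE (FMove child) (fun _ => True) (fun C n => ∃ t ≤ n, (C t).b r = 1) k := by
  refine ⟨as.length, fun t => FConfig.ofFinsets (run child as t).1 (run child as t).2,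
    FConfig.ofFinsets_empty, by dsimp only; rw [hend]; exact FConfig.ofFinsets_empty,
    fun t ht => FConfig.valid_ofFinsets (hdisj t ht), fun _ _ => trivial,
    fun t ht => ?_, ?_, fun t ht => ?_⟩
  · dsimp only
    rw [run_succ child as ht]
    exact fMove_apply hirr (hdisj t ht.le) (hlegal t ht)
  · obtain ⟨t, ht, hr⟩ := hgoal
    exact ⟨t, ht, by simp [FConfig.ofFinsets, hr]⟩
  · rw [FConfig.weight_ofFinsets]
    exact_mod_cast hcost t ht

end WholeMove

instance (d h : ℕ) : DecidableRel (IsChild d h) := fun c v => by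
  unfold IsChild; infer_instance

theorem IsChild.irrefl (d h : ℕ) (v : TNode d h) : ¬IsChild d h v v :=
  fun hv => absurd hv.1 (by omega)

namespace BinaryTree4

def node₁ (i : Fin 2) : TNode 2 4 := ⟨1, ⟨i, by simp; omega⟩⟩
def node₂ (i j : Fin 2) : TNode 2 4 := ⟨2, ⟨2 * i + j, by simp; omega⟩⟩
def node₃ (i j k : Fin 2) : TNode 2 4 := ⟨3, ⟨4 * i + 2 * j + k, by simp; omega⟩⟩

def root : TNode 2 4 := troot 2 4 four_pos

open WholeMove in
/-- Pebble the subtree of `node₁ 0` black with three pebbles (sliding pebbles up), then put a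
white pebble on `node₂ 1 1`, which leaves room to pebble `node₁ 1` and the root, and is
finally discharged by pebbling its own children. -/
def schedule : List (WholeMove (TNode 2 4)) :=
  [placeBlack (node₃ 0 0 0), placeBlack (node₃ 0 0 1), placeBlack (node₂ 0 0),
   placeBlack (node₃ 0 1 0), placeBlack (node₃ 0 1 1), placeBlack (node₂ 0 1),
   placeBlack (node₁ 0),
   placeBlack (node₃ 1 0 0), placeBlack (node₃ 1 0 1), placeBlack (node₂ 1 0),
   placeWhite (node₂ 1 1), placeBlack (node₁ 1), placeBlack root,
   removeBlack root,
   placeBlack (node₃ 1 1 0), placeBlack (node₃ 1 1 1), removeWhite (node₂ 1 1)]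

theorem frPebbles_three : FRPebbles 2 4 four_pos 3 := by
  exact_mod_cast WholeMove.pebblingLE_of_run (IsChild.irrefl 2 4) schedule (r := root) (k := 3)
    (by decide) (by decide) (by decide) (by decide) ⟨13, by decide, by decide⟩

@[simp] theorem node₁_inj {i i' : Fin 2} : node₁ i = node₁ i' ↔ i = i' := by decide +revert
@[simp] theorem node₂_inj {i j i' j' : Fin 2} : node₂ i j = node₂ i' j' ↔ i = i' ∧ j = j' := by
  decide +revert
@[simp] theorem node₃_inj {i j k i' j' k' : Fin 2} :
    node₃ i j k = node₃ i' j' k' ↔ i = i' ∧ j = j' ∧ k = k' := by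
  decide +revert
@[simp] theorem node₁_ne_node₂ {i i' j' : Fin 2} : node₁ i ≠ node₂ i' j' := by
  decide +revert
@[simp] theorem node₂_ne_node₁ {i j i' : Fin 2} : node₂ i j ≠ node₁ i' := by
  decide +revert
@[simp] theorem node₁_ne_node₃ {i i' j' k' : Fin 2} : node₁ i ≠ node₃ i' j' k' := by
  decide +revert
@[simp] theorem node₃_ne_node₁ {i j k i' : Fin 2} : node₃ i j k ≠ node₁ i' := by
  decide +revert
@[simp] theorem node₂_ne_node₃ {i j i' j' k' : Fin 2} : node₂ i j ≠ node₃ i' j' k' := by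
  decide +revert
@[simp] theorem node₃_ne_node₂ {i j k i' j' : Fin 2} : node₃ i j k ≠ node₂ i' j' := by
  decide +revert
@[simp] theorem rev_ne_self (i : Fin 2) : i.rev ≠ i := by decide +revert
@[simp] theorem self_ne_rev (i : Fin 2) : i ≠ i.rev := by decide +revert

theorem isChild_node₁ (i : Fin 2) : IsChild 2 4 (node₁ i) root := by decide +revert
theorem isChild_node₂ (i j : Fin 2) : IsChild 2 4 (node₂ i j) (node₁ i) := by decide +revert
theorem isChild_node₃ (i j k : Fin 2) : IsChild 2 4 (node₃ i j k) (node₂ i j) := by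
  decide +revert

variable {n : ℕ} {C : ℕ → FConfig (TNode 2 4)} {p : ℝ}

theorem w_node₂_le (P : IsFracPebbling (IsChild 2 4) n C p) (hp : p < 3) {i : Fin 2}
    (j : Fin 2) {ρx ρy t₀ : ℕ} (ht₀ : t₀ ≤ n)
    (hroot : (C t₀).ChildrenFull (IsChild 2 4) root)
    (hI : 2 + (C t₀).w (node₁ i) + (C t₀).w (node₁ i.rev) ≤ p)
    (hx : BlackHeld (IsChild 2 4) C (node₁ i) ρx t₀)
    (hy : BlackHeld (IsChild 2 4) C (node₁ i.rev) ρy t₀) (hxy : ρx < ρy) :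
    (C ρy).w (node₂ i.rev j) ≤ (C t₀).w (node₂ i.rev j) := by
  by_contra! h
  have hρy : ρy ≤ n := hy.1.le.trans ht₀
  obtain ⟨σ, hσn, hρσ, hfull, hheld⟩ :=
    P.exists_whiteHeld hρy (((P.valid t₀ ht₀) _).2.1.trans_lt h)
  have hσt : σ < t₀ := by
    by_contra! hσt
    exact (hheld t₀ hy.1.le hσt).not_gt h
  rcases hρσ.eq_or_lt with rfl | hρσ
  · have := P.four_le_of_childrenFull hρy (isChild_node₃ i.rev j 0) (isChild_node₃ i.rev j 1)
      (isChild_node₂ i.rev 0) (isChild_node₂ i.rev 1) (by simp) hfull hy.2.1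
    linarith
  · have := P.two_add_le_of_childrenFull hσn.le (isChild_node₃ i.rev j 0)
      (isChild_node₃ i.rev j 1) (a := node₁ i) (a' := node₁ i.rev) (by simp) hfull
    have := P.b_le_value_of_blackHeld hx ht₀ (hxy.trans hρσ) hσt.le
    have := P.b_le_value_of_blackHeld hy ht₀ hρσ hσt.le
    have := hroot _ (isChild_node₁ i)
    have := hroot _ (isChild_node₁ i.rev)
    linarith

theorem three_le_of_blackHeld_node₂ (P : IsFracPebbling (IsChild 2 4) n C p) {i j : Fin 2}
    {ρx ρy t₀ ρj ρk : ℕ} (ht₀ : t₀ ≤ n) (hx : BlackHeld (IsChild 2 4) C (node₁ i) ρx t₀)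
    (hx1 : (C t₀).b (node₁ i) + (C t₀).w (node₁ i) = 1) (hxy : ρx < ρy) (hyt : ρy < t₀)
    (hy : (C ρy).ChildrenFull (IsChild 2 4) (node₁ i.rev))
    (hj : BlackHeld (IsChild 2 4) C (node₂ i.rev j) ρj ρy)
    (hk : BlackHeld (IsChild 2 4) C (node₂ i.rev j.rev) ρk ρy) (hjk : ρj < ρk)
    (hIx : 2 + (C t₀).w (node₁ i) + (C ρy).w (node₂ i.rev j) ≤ p)
    (hIy : 2 + (C ρy).w (node₂ i.rev j) + (C ρy).w (node₂ i.rev j.rev) ≤ p) : 3 ≤ p := by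
  have hρy : ρy ≤ n := hyt.le.trans ht₀
  have hj1 := hy _ (isChild_node₂ i.rev j)
  have hk1 := hy _ (isChild_node₂ i.rev j.rev)
  rcases lt_trichotomy ρx ρk with h | rfl | h
  · have := P.two_add_le_of_childrenFull (hk.1.le.trans hρy) (isChild_node₃ i.rev j.rev 0)
      (isChild_node₃ i.rev j.rev 1) (a := node₂ i.rev j) (a' := node₁ i) (by simp) hk.2.1
    have := P.b_le_value_of_blackHeld hj hρy hjk hk.1.le
    have := P.b_le_value_of_blackHeld hx ht₀ h (hk.1.trans hyt).le
    linarith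
  · have := P.four_le_of_childrenFull ((hxy.trans hyt).le.trans ht₀) (isChild_node₂ i 0)
      (isChild_node₂ i 1) (isChild_node₃ i.rev j.rev 0) (isChild_node₃ i.rev j.rev 1) (by simp)
      hx.2.1 hk.2.1
    linarith
  · have := P.two_add_le_of_childrenFull ((hxy.trans hyt).le.trans ht₀) (isChild_node₂ i 0)
      (isChild_node₂ i 1) (a := node₂ i.rev j) (a' := node₂ i.rev j.rev) (by simp) hx.2.1
    have := P.b_le_value_of_blackHeld hj hρy (hjk.trans h) hxy.le
    have := P.b_le_value_of_blackHeld hk hρy h hxy.le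
    linarith

theorem three_le_of_blackHeld_node₁ (P : IsFracPebbling (IsChild 2 4) n C p) (hp2 : 2 ≤ p)
    {i : Fin 2} {ρx ρy t₀ : ℕ} (ht₀ : t₀ ≤ n)
    (hroot : (C t₀).ChildrenFull (IsChild 2 4) root)
    (hI : 2 + (C t₀).w (node₁ i) + (C t₀).w (node₁ i.rev) ≤ p)
    (hx : BlackHeld (IsChild 2 4) C (node₁ i) ρx t₀)
    (hy : BlackHeld (IsChild 2 4) C (node₁ i.rev) ρy t₀) (hxy : ρx < ρy) :
    3 ≤ p := by
  by_contra! hp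
  have hρy : ρy ≤ n := hy.1.le.trans ht₀
  have hwle (j : Fin 2) := w_node₂_le P hp j ht₀ hroot hI hx hy hxy
  have hIx (j : Fin 2) : 2 + (C t₀).w (node₁ i) + (C ρy).w (node₂ i.rev j) ≤ p := by
    have := P.two_add_w_add_w_le hp2 ht₀ (isChild_node₂ i 0) (isChild_node₂ i 1)
      (isChild_node₃ i.rev j 0) (isChild_node₃ i.rev j 1) (by simp) (by simp)
    linarith [hwle j]
  have hIy (j : Fin 2) :
      2 + (C ρy).w (node₂ i.rev j) + (C ρy).w (node₂ i.rev j.rev) ≤ p := by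
    have := P.two_add_w_add_w_le hp2 ht₀ (isChild_node₃ i.rev j 0) (isChild_node₃ i.rev j 1)
      (isChild_node₃ i.rev j.rev 0) (isChild_node₃ i.rev j.rev 1) (by simp) (by simp)
    linarith [hwle j, hwle j.rev]
  have hheld (j : Fin 2) : ∃ ρ, BlackHeld (IsChild 2 4) C (node₂ i.rev j) ρ ρy := by
    refine P.exists_blackHeld hρy ?_
    have := hy.2.1 _ (isChild_node₂ i.rev j)
    linarith [hIy j, ((P.valid ρy hρy) (node₂ i.rev j.rev)).2.1]
  obtain ⟨ρ₀, h₀⟩ := hheld 0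
  obtain ⟨ρ₁, h₁⟩ := hheld 1
  have hx1 := hroot _ (isChild_node₁ i)
  rcases lt_trichotomy ρ₀ ρ₁ with h | rfl | h
  · exact hp.not_ge
      (three_le_of_blackHeld_node₂ P ht₀ hx hx1 hxy hy.1 hy.2.1 h₀ h₁ h (hIx 0) (hIy 0))
  · have := P.four_le_of_childrenFull (h₀.1.le.trans hρy) (isChild_node₃ i.rev 0 0)
      (isChild_node₃ i.rev 0 1) (isChild_node₃ i.rev 1 0) (isChild_node₃ i.rev 1 1) (by simp)
      h₀.2.1 h₁.2.1
    linarith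
  · exact hp.not_ge
      (three_le_of_blackHeld_node₂ P ht₀ hx hx1 hxy hy.1 hy.2.1 h₁ h₀ h (hIx 1) (hIy 1))

theorem three_le_of_frPebbles {p : ℝ} (h : FRPebbles 2 4 four_pos p) : 3 ≤ p := by
  obtain ⟨n, C, h0, hn, hv, -, hm, ⟨T, hT, hrootT⟩, hw⟩ := h
  have P : IsFracPebbling (IsChild 2 4) n C p := ⟨h0, hn, hv, hm, hw⟩
  obtain ⟨t₀, ht₀T, hroot, -⟩ := P.exists_blackHeld (u := root) hT (by simp [root, hrootT])
  have ht₀ : t₀ ≤ n := by omega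
  have hp2 : 2 ≤ p := by
    have := P.two_add_le_of_childrenFull ht₀ (isChild_node₁ 0) (isChild_node₁ 1)
      (a := node₂ 0 0) (a' := node₂ 0 1) (by simp) hroot
    linarith [(P.valid t₀ ht₀).value_nonneg (node₂ 0 0),
      (P.valid t₀ ht₀).value_nonneg (node₂ 0 1)]
  have hI (i : Fin 2) : 2 + (C t₀).w (node₁ i) + (C t₀).w (node₁ i.rev) ≤ p :=
    P.two_add_w_add_w_le hp2 ht₀ (isChild_node₂ i 0) (isChild_node₂ i 1)
      (isChild_node₂ i.rev 0) (isChild_node₂ i.rev 1) (by simp) (by simp)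
  by_contra! hp
  have hheld (i : Fin 2) : ∃ ρ, BlackHeld (IsChild 2 4) C (node₁ i) ρ t₀ := by
    refine P.exists_blackHeld ht₀ ?_
    have := hroot _ (isChild_node₁ i)
    linarith [hI i, ((P.valid t₀ ht₀) (node₁ i.rev)).2.1]
  obtain ⟨ρ₀, h₀⟩ := hheld 0
  obtain ⟨ρ₁, h₁⟩ := hheld 1
  rcases lt_trichotomy ρ₀ ρ₁ with h | rfl | h
  · exact hp.not_ge (three_le_of_blackHeld_node₁ P hp2 ht₀ hroot (hI 0) h₀ h₁ h)
  · have := P.four_le_of_childrenFull (h₀.1.le.trans ht₀) (isChild_node₂ 0 0)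
      (isChild_node₂ 0 1) (isChild_node₂ 1 0) (isChild_node₂ 1 1) (by simp) h₀.2.1 h₁.2.1
    linarith
  · exact hp.not_ge (three_le_of_blackHeld_node₁ P hp2 ht₀ hroot (hI 1) h₁ h₀ h)

end BinaryTree4

theorem frPebbles_h4_eq :
    FRPebbles 2 4 (by omega) 3 ∧
    ∀ p : ℝ, FRPebbles 2 4 (by omega) p → (3 : ℝ) ≤ p :=
  ⟨BinaryTree4.frPebbles_three, fun _ => BinaryTree4.three_le_of_frPebbles⟩
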